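/- arXiv:1509.07234 — 2 statements merged into one kernel-verified Lean document; each statement's English description precedes it below -/
import Mathlib

section
/- Let ε > 0 and let φ : ℝ → [0,∞) satisfy the four penalty conditions (in particular φ'' ≤ 0 and φ' > 0 on (0,∞)). Then for every x ≠ 0, the strict inequality (φ'(√ε)/(2√ε))·x² + φ(√ε) > φ(√(x²+ε)) holds. -/
/-!
With `s = √ε` and `t = √(x² + ε) > s`, concavity puts `φ t` below the tangent line
`φ s + φ'(s) (t - s)`, and since `(t² - s²) / (2s) - (t - s) = (t - s)² / (2s) > 0` and
`φ'(s) > 0`, the quadratic majorizer `φ s + φ'(s) / (2s) · x²` lies strictly above that line.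
-/

lemma ConcaveOn.le_add_deriv_mul_sub {S : Set ℝ} {f : ℝ → ℝ} {x y : ℝ}
    (hf : ConcaveOn ℝ S f) (hx : x ∈ S) (hy : y ∈ S) (hxy : x < y)
    (hfd : DifferentiableAt ℝ f x) :
    f y ≤ f x + deriv f x * (y - x) := by
  have hslope := hf.slope_le_deriv hx hy hxy hfd
  rw [slope_def_field, div_le_iff₀ (sub_pos.mpr hxy)] at hslope
  linarith

lemma sub_lt_sq_sub_sq_div_two_mul {s t : ℝ} (hs : 0 < s) (hst : s < t) :
    t - s < (t ^ 2 - s ^ 2) / (2 * s) := by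
  rw [lt_div_iff₀ (by positivity)]
  nlinarith [sq_pos_of_pos (sub_pos.mpr hst)]

theorem stmt_3_general (ε : ℝ) (hε : 0 < ε) (φ : ℝ → ℝ)
    (hφ_conc : ConcaveOn ℝ (Set.Ici (0 : ℝ)) φ)
    (hφ_d1 : ∀ x ∈ Set.Ioi (0 : ℝ), 0 < deriv φ x) :
    ∀ x : ℝ, x ≠ 0 →
      deriv φ (Real.sqrt ε) / (2 * Real.sqrt ε) * x ^ 2 + φ (Real.sqrt ε) >
        φ (Real.sqrt (x ^ 2 + ε)) := by
  intro x hx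
  set s := Real.sqrt ε
  set t := Real.sqrt (x ^ 2 + ε)
  have hs : 0 < s := Real.sqrt_pos.mpr hε
  have hst : s < t := Real.sqrt_lt_sqrt hε.le (by linarith [sq_pos_of_ne_zero hx])
  have hx_sq : x ^ 2 = t ^ 2 - s ^ 2 := by
    rw [Real.sq_sqrt hε.le, Real.sq_sqrt (by positivity)]
    ring
  have hds : 0 < deriv φ s := hφ_d1 s hs
  have htangent : φ t ≤ φ s + deriv φ s * (t - s) :=
    hφ_conc.le_add_deriv_mul_sub hs.le (hs.trans hst).le hst
      (differentiableAt_of_deriv_ne_zero hds.ne')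
  have hgap : deriv φ s * (t - s) < deriv φ s / (2 * s) * x ^ 2 := by
    rw [hx_sq, div_mul_comm, mul_comm]
    exact mul_lt_mul_of_pos_right (sub_lt_sq_sub_sq_div_two_mul hs hst) hds
  linarith

/-- For `ε > 0` and `φ : ℝ → [0,∞)` satisfying the four penalty conditions
(in particular `φ'' ≤ 0` and `φ' > 0` on `(0,∞)`), the strict inequality
`(φ'(√ε)/(2√ε))x² + φ(√ε) > φ(√(x²+ε))` holds for every `x ≠ 0`. -/
theorem stmt_3 (ε : ℝ) (hε : 0 < ε) (φ : ℝ → ℝ)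
    (hφ_nonneg : ∀ u, 0 ≤ φ u)
    (hφ_cont : Continuous φ)
    (hφ_C2 : ContDiffOn ℝ 2 φ {(0 : ℝ)}ᶜ)
    (hφ_even : ∀ u, φ (-u) = φ u)
    (hφ_mono : MonotoneOn φ (Set.Ici (0 : ℝ)))
    (hφ_conc : ConcaveOn ℝ (Set.Ici (0 : ℝ)) φ)
    (hφ_d2 : ∀ x ∈ Set.Ioi (0 : ℝ), deriv (deriv φ) x ≤ 0)
    (hφ_d1 : ∀ x ∈ Set.Ioi (0 : ℝ), 0 < deriv φ x) :
    ∀ x : ℝ, x ≠ 0 →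
      deriv φ (Real.sqrt ε) / (2 * Real.sqrt ε) * x ^ 2 + φ (Real.sqrt ε) >
        φ (Real.sqrt (x ^ 2 + ε)) :=
  stmt_3_general ε hε φ hφ_conc hφ_d1
end

section
/- Let N ≥ 2, let A and B be N×N real matrices with A invertible, let R be an (N−1)×N real matrix, and let Λ be an (N−1)×(N−1) real matrix. Suppose M₂ = BᵀB + Aᵀ Rᵀ Λ R A is invertible. Then M₁ = A⁻ᵀ Bᵀ B A⁻¹ + Rᵀ Λ R is invertible, and M₁⁻¹ · A⁻ᵀ Bᵀ B A⁻¹ = A · M₂⁻¹ · Bᵀ B A⁻¹. -/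
open Matrix

/-! `M₁` is the congruence `A⁻ᵀ M₂ A⁻¹` of `M₂`; hence `M₁` is invertible with
`M₁⁻¹ = A M₂⁻¹ Aᵀ`, and the factor `Aᵀ` cancels the leading `A⁻ᵀ` of `A⁻ᵀBᵀBA⁻¹`. -/

namespace Matrix

variable {n K : Type*} [Fintype n] [DecidableEq n] [CommRing K] {A : Matrix n n K}

theorem transpose_mul_transpose_inv (hA : IsUnit A.det) : Aᵀ * (A⁻¹)ᵀ = 1 := by
  rw [← transpose_mul, nonsing_inv_mul A hA, transpose_one]

theorem transpose_inv_mul_transpose (hA : IsUnit A.det) : (A⁻¹)ᵀ * Aᵀ = 1 := by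
  rw [← transpose_mul, mul_nonsing_inv A hA, transpose_one]

theorem transpose_inv_mul_add_congr_mul_inv (hA : IsUnit A.det) (S C : Matrix n n K) :
    (A⁻¹)ᵀ * (S + Aᵀ * C * A) * A⁻¹ = (A⁻¹)ᵀ * S * A⁻¹ + C := by
  rw [Matrix.mul_add, Matrix.add_mul]
  congr 1
  simp only [Matrix.mul_assoc, mul_nonsing_inv A hA, Matrix.mul_one]
  rw [← Matrix.mul_assoc, transpose_inv_mul_transpose hA, Matrix.one_mul]

theorem isUnit_det_transpose_inv_mul_mul_inv (hA : IsUnit A.det) {M : Matrix n n K}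
    (hM : IsUnit M.det) : IsUnit ((A⁻¹)ᵀ * M * A⁻¹).det := by
  have hAinv : IsUnit (A⁻¹).det := isUnit_nonsing_inv_det A hA
  rw [det_mul, det_mul, det_transpose]
  exact (hAinv.mul hM).mul hAinv

theorem inv_transpose_inv_mul_mul_inv (hA : IsUnit A.det) (M : Matrix n n K) :
    ((A⁻¹)ᵀ * M * A⁻¹)⁻¹ = A * M⁻¹ * Aᵀ := by
  rw [Matrix.mul_inv_rev, Matrix.mul_inv_rev, nonsing_inv_nonsing_inv A hA,
    ← transpose_nonsing_inv, nonsing_inv_nonsing_inv A hA, Matrix.mul_assoc]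

end Matrix

theorem stmt_15_general (N : ℕ)
    (A B : Matrix (Fin N) (Fin N) ℝ) (hA : IsUnit A.det)
    (R : Matrix (Fin (N - 1)) (Fin N) ℝ)
    (Λ : Matrix (Fin (N - 1)) (Fin (N - 1)) ℝ)
    (M₁ M₂ : Matrix (Fin N) (Fin N) ℝ)
    (hM₁ : M₁ = (A⁻¹)ᵀ * Bᵀ * B * A⁻¹ + Rᵀ * Λ * R)
    (hM₂ : M₂ = Bᵀ * B + Aᵀ * Rᵀ * Λ * R * A)
    (hM₂_inv : IsUnit M₂.det) :
    IsUnit M₁.det ∧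
      M₁⁻¹ * ((A⁻¹)ᵀ * Bᵀ * B * A⁻¹) = A * M₂⁻¹ * (Bᵀ * B * A⁻¹) := by
  have hcongr : M₁ = (A⁻¹)ᵀ * M₂ * A⁻¹ := by
    rw [hM₁, hM₂]
    simpa only [Matrix.mul_assoc] using
      (transpose_inv_mul_add_congr_mul_inv hA (Bᵀ * B) (Rᵀ * Λ * R)).symm
  refine ⟨hcongr ▸ isUnit_det_transpose_inv_mul_mul_inv hA hM₂_inv, ?_⟩
  calc M₁⁻¹ * ((A⁻¹)ᵀ * Bᵀ * B * A⁻¹)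
      = A * M₂⁻¹ * (Aᵀ * (A⁻¹)ᵀ) * (Bᵀ * B * A⁻¹) := by
        rw [hcongr, inv_transpose_inv_mul_mul_inv hA]; noncomm_ring
    _ = A * M₂⁻¹ * (Bᵀ * B * A⁻¹) := by
        rw [transpose_mul_transpose_inv hA, Matrix.mul_one]

/-- With `A` invertible and `M₂ = BᵀB + AᵀRᵀΛRA` invertible, the matrix
`M₁ = A⁻ᵀBᵀBA⁻¹ + RᵀΛR` is invertible and
`M₁⁻¹·A⁻ᵀBᵀBA⁻¹ = A·M₂⁻¹·BᵀBA⁻¹`. -/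
theorem stmt_15 (N : ℕ) (hN : 2 ≤ N)
    (A B : Matrix (Fin N) (Fin N) ℝ) (hA : IsUnit A.det)
    (R : Matrix (Fin (N - 1)) (Fin N) ℝ)
    (Λ : Matrix (Fin (N - 1)) (Fin (N - 1)) ℝ)
    (M₁ M₂ : Matrix (Fin N) (Fin N) ℝ)
    (hM₁ : M₁ = (A⁻¹)ᵀ * Bᵀ * B * A⁻¹ + Rᵀ * Λ * R)
    (hM₂ : M₂ = Bᵀ * B + Aᵀ * Rᵀ * Λ * R * A)
    (hM₂_inv : IsUnit M₂.det) :
    IsUnit M₁.det ∧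
      M₁⁻¹ * ((A⁻¹)ᵀ * Bᵀ * B * A⁻¹) = A * M₂⁻¹ * (Bᵀ * B * A⁻¹) :=
  stmt_15_general N A B hA R Λ M₁ M₂ hM₁ hM₂ hM₂_inv
end
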